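/- Let F be a field of characteristic different from 2 and let K₃ be the three-dimensional Kaplansky superalgebra over F: the F-vector space with basis e, z, w and bilinear multiplication determined by e·e = e, e·z = z·e = (1/2)z, e·w = w·e = (1/2)w, z·w = e, w·z = −e, z·z = w·w = 0. If φ is a non-trivial δ-derivation of K₃ (i.e. a δ-derivation that is neither a derivation of K₃ nor a linear map vanishing on all products K₃·K₃), then δ = 1/2 and there exists α ∈ F such that φ(x) = α·x for all x ∈ K₃. Moreover, if δ ≠ 1/2 and δ ≠ 1, then every δ-derivation of K₃ is zero. -/

import Mathlib

/-!
Write a `δ`-derivation `φ` of `K₃` as a matrix in the basis `e, z, w`.  The products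
`e·e = e`, `e·z = z/2`, `e·w = w/2` and `z·z = w·w = 0` turn the `δ`-derivation identity into
linear equations on the nine entries, with coefficients `1 - δ`, `1 - 2δ` or `δ`.
For `δ = 1/2` only the scalar matrices survive; for `δ ∉ {1/2, 1}` every entry vanishes,
and `δ = 1` is the case of ordinary derivations.
-/

/-- The multiplication of the three-dimensional Kaplansky superalgebra
`K₃` in coordinates: `(a, b, c)` stands for `a·e + b·z + c·w`, with
`e·e = e`, `e·z = z·e = (1/2)z`, `e·w = w·e = (1/2)w`, `z·w = e`,
`w·z = −e`, `z·z = w·w = 0`. -/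
def K3mul {F : Type*} [Field F] (x y : F × F × F) : F × F × F :=
  (x.1 * y.1 + x.2.1 * y.2.2 - x.2.2 * y.2.1,
   (1 / 2 : F) * (x.1 * y.2.1 + y.1 * x.2.1),
   (1 / 2 : F) * (x.1 * y.2.2 + y.1 * x.2.2))

def IsDeltaDerivation {R M : Type*} [CommSemiring R] [AddCommMonoid M] [Module R M]
    (mul : M → M → M) (δ : R) (φ : M →ₗ[R] M) : Prop :=
  ∀ x y, φ (mul x y) = δ • (mul (φ x) y + mul x (φ y))

namespace K3

variable {F : Type*} [Field F]

def e : F × F × F := (1, 0, 0)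

def z : F × F × F := (0, 1, 0)

def w : F × F × F := (0, 0, 1)

theorem linearMap_ext {M : Type*} [AddCommMonoid M] [Module F M] {f g : (F × F × F) →ₗ[F] M}
    (he : f e = g e) (hz : f z = g z) (hw : f w = g w) : f = g :=
  LinearMap.prod_ext (LinearMap.ext_ring he)
    (LinearMap.prod_ext (LinearMap.ext_ring hz) (LinearMap.ext_ring hw))

variable {δ : F} {φ : (F × F × F) →ₗ[F] (F × F × F)} {a₁ a₂ a₃ b₁ b₂ b₃ c₁ c₂ c₃ : F}

theorem map_e_mul_e (hchar : (2 : F) ≠ 0) (hφ : IsDeltaDerivation K3mul δ φ)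
    (ha : φ e = (a₁, a₂, a₃)) :
    a₁ = 2 * δ * a₁ ∧ a₂ = δ * a₂ ∧ a₃ = δ * a₃ := by
  have h := hφ e e
  rw [show K3mul e e = (e : F × F × F) by simp [K3mul, e], ha] at h
  simp only [K3mul, e, Prod.smul_mk, Prod.mk_add_mk, smul_eq_mul, Prod.mk.injEq] at h
  obtain ⟨h₁, h₂, h₃⟩ := h
  field_simp at h₁ h₂ h₃
  exact ⟨by linear_combination h₁, mul_left_cancel₀ hchar (by linear_combination h₂),
    mul_left_cancel₀ hchar (by linear_combination h₃)⟩

theorem map_e_mul_z (hchar : (2 : F) ≠ 0) (hφ : IsDeltaDerivation K3mul δ φ)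
    (ha : φ e = (a₁, a₂, a₃)) (hb : φ z = (b₁, b₂, b₃)) :
    b₁ = 2 * δ * (b₁ - a₃) ∧ b₂ = δ * (a₁ + b₂) ∧ b₃ = δ * b₃ := by
  have h := hφ e z
  rw [show K3mul e z = (1 / 2 : F) • (z : F × F × F) by simp [K3mul, e, z], map_smul, ha, hb] at h
  simp only [K3mul, e, z, Prod.smul_mk, Prod.mk_add_mk, smul_eq_mul, Prod.mk.injEq] at h
  obtain ⟨h₁, h₂, h₃⟩ := h
  field_simp at h₁ h₂ h₃
  exact ⟨by linear_combination h₁, by linear_combination h₂, by linear_combination h₃⟩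

theorem map_e_mul_w (hchar : (2 : F) ≠ 0) (hφ : IsDeltaDerivation K3mul δ φ)
    (ha : φ e = (a₁, a₂, a₃)) (hc : φ w = (c₁, c₂, c₃)) :
    c₁ = 2 * δ * (c₁ + a₂) ∧ c₂ = δ * c₂ ∧ c₃ = δ * (a₁ + c₃) := by
  have h := hφ e w
  rw [show K3mul e w = (1 / 2 : F) • (w : F × F × F) by simp [K3mul, e, w], map_smul, ha, hc] at h
  simp only [K3mul, e, w, Prod.smul_mk, Prod.mk_add_mk, smul_eq_mul, Prod.mk.injEq] at h
  obtain ⟨h₁, h₂, h₃⟩ := h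
  field_simp at h₁ h₂ h₃
  exact ⟨by linear_combination h₁, by linear_combination h₂, by linear_combination h₃⟩

theorem map_z_mul_z (hchar : (2 : F) ≠ 0) (hφ : IsDeltaDerivation K3mul δ φ)
    (hb : φ z = (b₁, b₂, b₃)) : δ * b₁ = 0 := by
  have h := hφ z z
  rw [show K3mul z z = (0 : F × F × F) by simp [K3mul, z], map_zero, hb] at h
  simp only [K3mul, z, Prod.smul_mk, Prod.mk_add_mk, smul_eq_mul, Prod.ext_iff, Prod.fst_zero,
    Prod.snd_zero] at h
  have h₂ := h.2.1
  field_simp at h₂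
  exact mul_left_cancel₀ hchar (by linear_combination -h₂)

theorem map_w_mul_w (hchar : (2 : F) ≠ 0) (hφ : IsDeltaDerivation K3mul δ φ)
    (hc : φ w = (c₁, c₂, c₃)) : δ * c₁ = 0 := by
  have h := hφ w w
  rw [show K3mul w w = (0 : F × F × F) by simp [K3mul, w], map_zero, hc] at h
  simp only [K3mul, w, Prod.smul_mk, Prod.mk_add_mk, smul_eq_mul, Prod.ext_iff, Prod.fst_zero,
    Prod.snd_zero] at h
  have h₃ := h.2.2
  field_simp at h₃
  exact mul_left_cancel₀ hchar (by linear_combination -h₃)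

theorem eq_smul_id_of_isDeltaDerivation_half (hchar : (2 : F) ≠ 0)
    (hφ : IsDeltaDerivation K3mul (1 / 2) φ) : ∃ α : F, φ = α • LinearMap.id := by
  obtain ⟨a₁, a₂, a₃, ha⟩ : ∃ a₁ a₂ a₃, φ e = (a₁, a₂, a₃) := ⟨_, _, _, rfl⟩
  obtain ⟨b₁, b₂, b₃, hb⟩ : ∃ b₁ b₂ b₃, φ z = (b₁, b₂, b₃) := ⟨_, _, _, rfl⟩
  obtain ⟨c₁, c₂, c₃, hc⟩ : ∃ c₁ c₂ c₃, φ w = (c₁, c₂, c₃) := ⟨_, _, _, rfl⟩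
  obtain ⟨-, ha₂, ha₃⟩ := map_e_mul_e hchar hφ ha
  obtain ⟨-, hb₂, hb₃⟩ := map_e_mul_z hchar hφ ha hb
  obtain ⟨-, hc₂, hc₃⟩ := map_e_mul_w hchar hφ ha hc
  have hb₁ := map_z_mul_z hchar hφ hb
  have hc₁ := map_w_mul_w hchar hφ hc
  have h2 : (2 : F) * (1 / 2) = 1 := mul_one_div_cancel hchar
  have ha₂' : a₂ = 0 := by linear_combination 2 * ha₂ + a₂ * h2
  have ha₃' : a₃ = 0 := by linear_combination 2 * ha₃ + a₃ * h2
  have hb₁' : b₁ = 0 := by linear_combination 2 * hb₁ - b₁ * h2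
  have hb₂' : b₂ = a₁ := by linear_combination 2 * hb₂ + (a₁ + b₂) * h2
  have hb₃' : b₃ = 0 := by linear_combination 2 * hb₃ + b₃ * h2
  have hc₁' : c₁ = 0 := by linear_combination 2 * hc₁ - c₁ * h2
  have hc₂' : c₂ = 0 := by linear_combination 2 * hc₂ + c₂ * h2
  have hc₃' : c₃ = a₁ := by linear_combination 2 * hc₃ + (a₁ + c₃) * h2
  subst ha₂' ha₃' hb₁' hb₃' hc₁' hc₂' b₂ c₃
  refine ⟨a₁, linearMap_ext ?_ ?_ ?_⟩
  · rw [ha]; simp [e]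
  · rw [hb]; simp [z]
  · rw [hc]; simp [w]

theorem eq_zero_of_isDeltaDerivation (hchar : (2 : F) ≠ 0) (hφ : IsDeltaDerivation K3mul δ φ)
    (hhalf : δ ≠ 1 / 2) (hone : δ ≠ 1) : φ = 0 := by
  obtain ⟨a₁, a₂, a₃, ha⟩ : ∃ a₁ a₂ a₃, φ e = (a₁, a₂, a₃) := ⟨_, _, _, rfl⟩
  obtain ⟨b₁, b₂, b₃, hb⟩ : ∃ b₁ b₂ b₃, φ z = (b₁, b₂, b₃) := ⟨_, _, _, rfl⟩
  obtain ⟨c₁, c₂, c₃, hc⟩ : ∃ c₁ c₂ c₃, φ w = (c₁, c₂, c₃) := ⟨_, _, _, rfl⟩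
  obtain ⟨ha₁, ha₂, ha₃⟩ := map_e_mul_e hchar hφ ha
  obtain ⟨hb₁, hb₂, hb₃⟩ := map_e_mul_z hchar hφ ha hb
  obtain ⟨hc₁, hc₂, hc₃⟩ := map_e_mul_w hchar hφ ha hc
  have h2δ : 1 - 2 * δ ≠ 0 := by
    refine fun h => hhalf ?_
    field_simp
    linear_combination -h
  have h1δ : 1 - δ ≠ 0 := sub_ne_zero.mpr hone.symm
  have ha₁' : a₁ = 0 := (mul_eq_zero_iff_left h2δ).mp (by linear_combination ha₁)
  have ha₂' : a₂ = 0 := (mul_eq_zero_iff_left h1δ).mp (by linear_combination ha₂)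
  have ha₃' : a₃ = 0 := (mul_eq_zero_iff_left h1δ).mp (by linear_combination ha₃)
  subst ha₁' ha₂' ha₃'
  have hb₁' : b₁ = 0 := (mul_eq_zero_iff_left h2δ).mp (by linear_combination hb₁)
  have hb₂' : b₂ = 0 := (mul_eq_zero_iff_left h1δ).mp (by linear_combination hb₂)
  have hb₃' : b₃ = 0 := (mul_eq_zero_iff_left h1δ).mp (by linear_combination hb₃)
  have hc₁' : c₁ = 0 := (mul_eq_zero_iff_left h2δ).mp (by linear_combination hc₁)
  have hc₂' : c₂ = 0 := (mul_eq_zero_iff_left h1δ).mp (by linear_combination hc₂)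
  have hc₃' : c₃ = 0 := (mul_eq_zero_iff_left h1δ).mp (by linear_combination hc₃)
  subst hb₁' hb₂' hb₃' hc₁' hc₂' hc₃'
  exact linearMap_ext (by simp [ha]) (by simp [hb]) (by simp [hc])

end K3

/-- **δ-derivations of the Kaplansky superalgebra `K₃`.**
Let `F` be a field of characteristic not `2`, `δ ∈ F` and `φ` a
`δ`-derivation of `K₃`.  If `φ` is non-trivial (neither a derivation nor
vanishing on all products), then `δ = 1/2` and `φ x = α • x` for some
`α ∈ F`.  Moreover, if `δ ≠ 1/2` and `δ ≠ 1` then `φ = 0`. -/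
theorem delta_derivation_of_K3
    {F : Type*} [Field F] (hchar : (2 : F) ≠ 0)
    (δ : F) (φ : (F × F × F) →ₗ[F] (F × F × F))
    (hφ : ∀ x y : F × F × F, φ (K3mul x y) = δ • (K3mul (φ x) y + K3mul x (φ y))) :
    ((¬ (∀ x y : F × F × F, φ (K3mul x y) = K3mul (φ x) y + K3mul x (φ y)) ∧
        ¬ (∀ x y : F × F × F, φ (K3mul x y) = 0)) →
      δ = 1 / 2 ∧ ∃ α : F, ∀ x : F × F × F, φ x = α • x) ∧
    ((δ ≠ 1 / 2 ∧ δ ≠ 1) → φ = 0) := by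
  have hzero : δ ≠ 1 / 2 → δ ≠ 1 → φ = 0 := K3.eq_zero_of_isDeltaDerivation hchar hφ
  refine ⟨fun ⟨hnotDer, hnotZero⟩ => ?_, fun h => hzero h.1 h.2⟩
  by_cases hhalf : δ = 1 / 2
  · subst hhalf
    obtain ⟨α, hα⟩ := K3.eq_smul_id_of_isDeltaDerivation_half hchar hφ
    exact ⟨rfl, α, fun x => by simp [hα]⟩
  by_cases hone : δ = 1
  · exact absurd (fun x y => by rw [hφ, hone, one_smul]) hnotDer
  · exact absurd (fun x y => by simp [hzero hhalf hone]) hnotZero
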